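/- arXiv:1301.1713 — 8 statements merged into one kernel-verified Lean document; each statement's English description precedes it below -/
import Mathlib

section
/- For a (p,q)-clan γ = c_1...c_n, the rank numbers γ(i;+), γ(i;-) for 1 ≤ i ≤ n and γ(i;j) for 1 ≤ i < j ≤ n determine γ uniquely. That is, if two (p,q)-clans have identical rank numbers γ(i;+), γ(i;-), and γ(i;j) for all valid indices, then they are equal as clans. -/
open Finset

/-- A `(p,q)`-clan on `n = p+q` positions.  Each position carries either a sign
(`Sum.inl true` = `+`, `Sum.inl false` = `-`) or is matched with another position
(`Sum.inr j` means position `i` is matched with position `j`).  Matching is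
symmetric and irreflexive, and `#+ - #- = p - q`. -/
structure Clan (p q : ℕ) where
  c : Fin (p + q) → Bool ⊕ Fin (p + q)
  mate_ne : ∀ i j, c i = Sum.inr j → i ≠ j
  mate_mate : ∀ i j, c i = Sum.inr j → c j = Sum.inr i
  signs : (Finset.univ.filter fun i => c i = Sum.inl true).card + q
        = (Finset.univ.filter fun i => c i = Sum.inl false).card + p

namespace Clan

variable {p q : ℕ}

/-- `γ(i;+)`: number of `+` signs plus complete pairs among the first `i` positions
(1-indexed; position `a : Fin (p+q)` is among the first `i` iff `a.val < i`). -/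
def rankPlus (γ : Clan p q) (i : ℕ) : ℕ :=
  (Finset.univ.filter fun a : Fin (p + q) => a.val < i ∧ γ.c a = Sum.inl true).card
    + (Finset.univ.filter fun a : Fin (p + q) =>
        a.val < i ∧ ∃ b, γ.c a = Sum.inr b ∧ b < a).card

/-- `γ(i;-)`: number of `-` signs plus complete pairs among the first `i` positions. -/
def rankMinus (γ : Clan p q) (i : ℕ) : ℕ :=
  (Finset.univ.filter fun a : Fin (p + q) => a.val < i ∧ γ.c a = Sum.inl false).card
    + (Finset.univ.filter fun a : Fin (p + q) =>
        a.val < i ∧ ∃ b, γ.c a = Sum.inr b ∧ b < a).card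

/-- `γ(i;j)`: number of pairs `c_s = c_t` with `s ≤ i < j < t` (1-indexed). -/
def rankPair (γ : Clan p q) (i j : ℕ) : ℕ :=
  (Finset.univ.filter fun a : Fin (p + q) =>
    a.val < i ∧ ∃ b, γ.c a = Sum.inr b ∧ j ≤ b.val).card

/-- The combinatorial Bruhat order on `(p,q)`-clans. -/
def le (γ τ : Clan p q) : Prop :=
  (∀ i, τ.rankPlus i ≤ γ.rankPlus i) ∧
  (∀ i, τ.rankMinus i ≤ γ.rankMinus i) ∧
  (∀ i j, i < j → γ.rankPair i j ≤ τ.rankPair i j)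

/-- Strict combinatorial Bruhat order. -/
def lt (γ τ : Clan p q) : Prop := Clan.le γ τ ∧ ¬ Clan.le τ γ

end Clan

/-- Counting elements of `Fin n` with value below `i + 1` satisfying `P`, versus
value below `i`. -/
lemma Clan.card_step {n : ℕ} (P : Fin n → Prop) [DecidablePred P] {i : ℕ} (h : i < n) :
    (Finset.univ.filter fun a : Fin n => a.val < i + 1 ∧ P a).card
      = (Finset.univ.filter fun a : Fin n => a.val < i ∧ P a).card
        + (if P ⟨i, h⟩ then 1 else 0) := by
  have hsplit : (Finset.univ.filter fun a : Fin n => a.val < i + 1 ∧ P a)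
      = (Finset.univ.filter fun a : Fin n => a.val < i ∧ P a)
        ∪ (Finset.univ.filter fun a : Fin n => a = ⟨i, h⟩ ∧ P a) := by
    ext a
    simp only [mem_filter, mem_union, mem_univ, true_and]
    constructor
    · rintro ⟨hlt, hp⟩
      rcases Nat.lt_succ_iff_lt_or_eq.mp hlt with h' | h'
      · exact Or.inl ⟨h', hp⟩
      · exact Or.inr ⟨Fin.ext h', hp⟩
    · rintro (⟨h', hp⟩ | ⟨h', hp⟩)
      · exact ⟨Nat.lt_succ_of_lt h', hp⟩
      · subst h'; exact ⟨Nat.lt_succ_self i, hp⟩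
  have hdisj : Disjoint (Finset.univ.filter fun a : Fin n => a.val < i ∧ P a)
      (Finset.univ.filter fun a : Fin n => a = ⟨i, h⟩ ∧ P a) := by
    rw [Finset.disjoint_left]
    rintro a ha hb
    simp only [mem_filter, mem_univ, true_and] at ha hb
    rw [hb.1] at ha
    exact absurd ha.1 (by simp)
  rw [hsplit, Finset.card_union_of_disjoint hdisj]
  congr 1
  by_cases hp : P ⟨i, h⟩
  · rw [if_pos hp]
    have hone : (Finset.univ.filter fun a : Fin n => a = ⟨i, h⟩ ∧ P a) = {⟨i, h⟩} := by
      ext a; simp only [mem_filter, mem_univ, true_and, mem_singleton]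
      constructor
      · exact fun h => h.1
      · rintro rfl; exact ⟨rfl, hp⟩
    rw [hone, Finset.card_singleton]
  · rw [if_neg hp]
    have hnone : (Finset.univ.filter fun a : Fin n => a = ⟨i, h⟩ ∧ P a) = ∅ := by
      ext a; simp only [mem_filter, mem_univ, true_and, notMem_empty, iff_false]
      rintro ⟨rfl, hp'⟩; exact hp hp'
    rw [hnone, Finset.card_empty]

namespace Clan

variable {p q : ℕ}

lemma rankPlus_step (δ : Clan p q) (k : Fin (p + q)) :
    δ.rankPlus (k.val + 1) = δ.rankPlus k.val
      + ((if δ.c k = Sum.inl true then 1 else 0)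
        + (if (∃ b, δ.c k = Sum.inr b ∧ b < k) then 1 else 0)) := by
  unfold Clan.rankPlus
  rw [Clan.card_step (fun a => δ.c a = Sum.inl true) k.isLt,
      Clan.card_step (fun a => ∃ b, δ.c a = Sum.inr b ∧ b < a) k.isLt]
  simp only [Fin.eta]
  ring

lemma rankMinus_step (δ : Clan p q) (k : Fin (p + q)) :
    δ.rankMinus (k.val + 1) = δ.rankMinus k.val
      + ((if δ.c k = Sum.inl false then 1 else 0)
        + (if (∃ b, δ.c k = Sum.inr b ∧ b < k) then 1 else 0)) := by
  unfold Clan.rankMinus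
  rw [Clan.card_step (fun a => δ.c a = Sum.inl false) k.isLt,
      Clan.card_step (fun a => ∃ b, δ.c a = Sum.inr b ∧ b < a) k.isLt]
  simp only [Fin.eta]
  ring

lemma rankPair_step (δ : Clan p q) (k : Fin (p + q)) (j : ℕ) :
    δ.rankPair (k.val + 1) j = δ.rankPair k.val j
      + (if (∃ b, δ.c k = Sum.inr b ∧ j ≤ b.val) then 1 else 0) := by
  unfold Clan.rankPair
  rw [Clan.card_step (fun a => ∃ b, δ.c a = Sum.inr b ∧ j ≤ b.val) k.isLt]

lemma rankPlus_zero (δ : Clan p q) : δ.rankPlus 0 = 0 := by simp [Clan.rankPlus]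
lemma rankMinus_zero (δ : Clan p q) : δ.rankMinus 0 = 0 := by simp [Clan.rankMinus]
lemma rankPair_zero (δ : Clan p q) (j : ℕ) : δ.rankPair 0 j = 0 := by simp [Clan.rankPair]

/-- If two clans have the same pair rank numbers, an opener of both cannot have a
strictly smaller mate in the second clan. -/
lemma mate_unique_aux (γ τ : Clan p q)
    (hpair : ∀ i j, 1 ≤ i → i < j → j ≤ p + q → γ.rankPair i j = τ.rankPair i j)
    (s t t' : Fin (p + q)) (hγ : γ.c s = Sum.inr t) (hτ : τ.c s = Sum.inr t')
    (hst' : s < t') (h : t' < t) : False := by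
  set j := t'.val + 1 with hj
  have hst'v : s.val < t'.val := hst'
  have h1 : γ.rankPair (s.val + 1) j = γ.rankPair s.val j + 1 := by
    have hstep := γ.rankPair_step s j
    rw [if_pos ⟨t, hγ, h⟩] at hstep
    exact hstep
  have h2 : τ.rankPair (s.val + 1) j = τ.rankPair s.val j := by
    have hstep := τ.rankPair_step s j
    rw [if_neg (by rintro ⟨b, hb, hjb⟩; rw [hτ] at hb; cases hb; omega)] at hstep
    simpa using hstep
  have h3 : γ.rankPair (s.val + 1) j = τ.rankPair (s.val + 1) j :=
    hpair _ _ (by omega) (by omega) (by have := t'.isLt; omega)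
  have h4 : γ.rankPair s.val j = τ.rankPair s.val j := by
    rcases Nat.eq_zero_or_pos s.val with h0 | h0
    · rw [h0, γ.rankPair_zero, τ.rankPair_zero]
    · exact hpair _ _ h0 (by omega) (by have := t'.isLt; omega)
  omega

/-- If two clans have the same pair rank numbers, openers have the same mates. -/
lemma mate_unique (γ τ : Clan p q)
    (hpair : ∀ i j, 1 ≤ i → i < j → j ≤ p + q → γ.rankPair i j = τ.rankPair i j)
    (s t t' : Fin (p + q)) (hγ : γ.c s = Sum.inr t) (hτ : τ.c s = Sum.inr t')
    (hst : s < t) (hst' : s < t') : t = t' := by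
  rcases lt_trichotomy t t' with h | h | h
  · exact absurd (mate_unique_aux τ γ (fun i j h1 h2 h3 => (hpair i j h1 h2 h3).symm)
      s t' t hτ hγ hst h) not_false
  · exact h
  · exact absurd (mate_unique_aux γ τ hpair s t t' hγ hτ hst' h) not_false

end Clan

/-- The rank numbers determine a `(p,q)`-clan uniquely. -/
theorem clan_determined_by_rank_numbers {p q : ℕ} (γ τ : Clan p q)
    (hplus : ∀ i, 1 ≤ i → i ≤ p + q → γ.rankPlus i = τ.rankPlus i)
    (hminus : ∀ i, 1 ≤ i → i ≤ p + q → γ.rankMinus i = τ.rankMinus i)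
    (hpair : ∀ i j, 1 ≤ i → i < j → j ≤ p + q → γ.rankPair i j = τ.rankPair i j) :
    γ = τ := by
  -- Step 1: the "type" of each position (sign, or closer/opener) agrees.
  have htype : ∀ k : Fin (p + q),
      (γ.c k = Sum.inl true ↔ τ.c k = Sum.inl true) ∧
      (γ.c k = Sum.inl false ↔ τ.c k = Sum.inl false) ∧
      ((∃ b, γ.c k = Sum.inr b ∧ b < k) ↔ (∃ b, τ.c k = Sum.inr b ∧ b < k)) := by
    intro k
    have e0 : γ.rankPlus k.val = τ.rankPlus k.val := by
      rcases Nat.eq_zero_or_pos k.val with h0 | h0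
      · rw [h0, γ.rankPlus_zero, τ.rankPlus_zero]
      · exact hplus _ h0 (le_of_lt k.isLt)
    have e1 : γ.rankPlus (k.val + 1) = τ.rankPlus (k.val + 1) := hplus _ (by omega) k.isLt
    have f0 : γ.rankMinus k.val = τ.rankMinus k.val := by
      rcases Nat.eq_zero_or_pos k.val with h0 | h0
      · rw [h0, γ.rankMinus_zero, τ.rankMinus_zero]
      · exact hminus _ h0 (le_of_lt k.isLt)
    have f1 : γ.rankMinus (k.val + 1) = τ.rankMinus (k.val + 1) := hminus _ (by omega) k.isLt
    have g1 := γ.rankPlus_step k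
    have g2 := τ.rankPlus_step k
    have g3 := γ.rankMinus_step k
    have g4 := τ.rankMinus_step k
    have eP : (if γ.c k = Sum.inl true then 1 else 0)
        + (if (∃ b, γ.c k = Sum.inr b ∧ b < k) then 1 else 0)
        = (if τ.c k = Sum.inl true then 1 else 0)
        + (if (∃ b, τ.c k = Sum.inr b ∧ b < k) then 1 else 0) := by omega
    have eM : (if γ.c k = Sum.inl false then 1 else 0)
        + (if (∃ b, γ.c k = Sum.inr b ∧ b < k) then 1 else 0)
        = (if τ.c k = Sum.inl false then 1 else 0)
        + (if (∃ b, τ.c k = Sum.inr b ∧ b < k) then 1 else 0) := by omega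
    clear g1 g2 g3 g4 e0 e1 f0 f1
    rcases hg : γ.c k with b | t <;> rcases ht : τ.c k with b' | t' <;>
      [cases b <;> cases b'; cases b; cases b'; skip] <;>
      simp only [hg, ht, Sum.inl.injEq, Sum.inr.injEq, reduceCtorEq, eq_self_iff_true,
        if_true, if_false, exists_eq_left', false_and, exists_false, iff_self, iff_true,
        true_and, and_true, true_iff, iff_false, false_iff, Nat.add_zero, Nat.zero_add]
        at eP eM ⊢ <;>
      first
        | omega
        | tauto
        | (by_cases h1 : t < k <;> by_cases h2 : t' < k <;>
            first
              | exact iff_of_true h1 h2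
              | exact iff_of_false h1 h2
              | (rw [if_pos h1, if_neg h2] at eP; omega)
              | (rw [if_neg h1, if_pos h2] at eP; omega))
  -- Step 2: openers of γ are openers of τ with the same mate.
  have hop : ∀ s t : Fin (p + q), γ.c s = Sum.inr t → s < t → τ.c s = Sum.inr t := by
    intro s t hγs hst
    obtain ⟨h1, h2, h3⟩ := htype s
    rcases hts : τ.c s with b | t'
    · cases b
      · rw [h2.mpr hts] at hγs; cases hγs
      · rw [h1.mpr hts] at hγs; cases hγs
    · have ht'k : ¬ t' < s := by
        intro hlt
        obtain ⟨b, hb, hbs⟩ := h3.mpr ⟨t', hts, hlt⟩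
        rw [hγs] at hb
        cases hb
        exact absurd hst (not_lt.mpr (le_of_lt hbs))
      have hne : s ≠ t' := τ.mate_ne s t' hts
      have hst' : s < t' := lt_of_le_of_ne (not_lt.mp ht'k) hne
      have heq : t = t' := Clan.mate_unique γ τ hpair s t t' hγs hts hst hst'
      rw [heq]
  -- Conclusion: the underlying functions agree.
  have hc : γ.c = τ.c := by
    funext k
    rcases hgk : γ.c k with b | t
    · cases b
      · exact ((htype k).2.1.mp hgk).symm
      · exact ((htype k).1.mp hgk).symm
    · have hne : k ≠ t := γ.mate_ne k t hgk
      rcases lt_or_gt_of_ne hne with h | h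
      · exact (hop k t hgk h).symm
      · have hmt : γ.c t = Sum.inr k := γ.mate_mate k t hgk
        have h1 : τ.c t = Sum.inr k := hop t k hmt h
        have h2 : τ.c k = Sum.inr t := τ.mate_mate t k h1
        exact h2.symm
  cases γ; cases τ
  simp only at hc
  subst hc
  rfl
end

section
/- Two involutions γ, τ in the symmetric group S_n satisfy γ ≤ τ in Bruhat order if and only if (1) γ(i;·) ≥ τ(i;·) for all i = 1,...,n, and (2) γ(s;t) ≤ τ(s;t) for all 1 ≤ s < t ≤ n, where for an involution w viewed as a string with pairs of matching numbers at positions of its 2-cycles and dots at its fixed points: w(i;·) is the number of dots plus twice the number of complete pairs among positions 1..i, and w(s;t) is the number of 2-cycles (a,b) of w with a ≤ s and b > t. -/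
open Finset

/-- The Bruhat order on `S_n` via rank matrices:
`u ≤ v` iff for all `i, j`, `#{a ≤ i : u(a) ≥ j} ≤ #{a ≤ i : v(a) ≥ j}`
(positions and values 1-indexed). -/
def bruhatLE {n : ℕ} (u v : Equiv.Perm (Fin n)) : Prop :=
  ∀ i j : ℕ,
    (Finset.univ.filter fun a : Fin n => a.val < i ∧ j ≤ (u a).val + 1).card ≤
    (Finset.univ.filter fun a : Fin n => a.val < i ∧ j ≤ (v a).val + 1).card

/-- For an involution `w`: the number of fixed points plus twice the number of
2-cycles entirely within the first `i` positions. -/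
def dotRank {n : ℕ} (w : Equiv.Perm (Fin n)) (i : ℕ) : ℕ :=
  (Finset.univ.filter fun a : Fin n => a.val < i ∧ w a = a).card +
    2 * (Finset.univ.filter fun a : Fin n => a.val < i ∧ w a < a).card

/-- For an involution `w`: the number of 2-cycles `(a,b)`, `a < b`, with
`a ≤ s` and `b > t` (1-indexed). -/
def pairRank {n : ℕ} (w : Equiv.Perm (Fin n)) (s t : ℕ) : ℕ :=
  (Finset.univ.filter fun a : Fin n => a.val < s ∧ a < w a ∧ t ≤ (w a).val).card

variable {n : ℕ}

def R (w : Equiv.Perm (Fin n)) (i j : ℕ) : ℕ :=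
  (Finset.univ.filter fun a : Fin n => a.val < i ∧ j ≤ (w a).val + 1).card

lemma split (p q : Fin n → Prop) [DecidablePred p] [DecidablePred q] :
    (univ.filter fun a => p a ∧ q a).card + (univ.filter fun a => p a ∧ ¬ q a).card
      = (univ.filter p).card := by
  rw [← Finset.filter_filter, ← Finset.filter_filter,
    Finset.card_filter_add_card_filter_not]

lemma card_swap (w : Equiv.Perm (Fin n)) (hw : w * w = 1)
    (P : Fin n → Fin n → Prop) [∀ a b : Fin n, Decidable (P a b)] :
    (univ.filter fun a => P a (w a)).card = (univ.filter fun a => P (w a) a).card := by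
  have hww : ∀ a, w (w a) = a := fun a => by
    have := congrArg (fun p : Equiv.Perm (Fin n) => p a) hw
    simpa using this
  apply Finset.card_bij (fun a _ => w a)
  · intro a ha
    simp only [mem_filter, mem_univ, true_and] at ha ⊢
    rwa [hww]
  · intro a _ b _ h
    exact w.injective h
  · intro b hb
    refine ⟨w b, ?_, hww b⟩
    simp only [mem_filter, mem_univ, true_and] at hb ⊢
    rwa [hww]

lemma card_univ_lt (i : ℕ) : (univ.filter fun a : Fin n => a.val < i).card = min i n := by
  have h : ∀ m ∈ Finset.range (min i n), m < n := fun m hm => by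
    simp only [Finset.mem_range, lt_min_iff] at hm; exact hm.2
  rw [show (univ.filter fun a : Fin n => a.val < i) = (Finset.range (min i n)).attachFin h from ?_,
    Finset.card_attachFin, Finset.card_range]
  ext a
  simp [Finset.mem_attachFin, lt_min_iff, a.isLt]

lemma R_le_one (w : Equiv.Perm (Fin n)) (i j : ℕ) (hj : j ≤ 1) : R w i j = min i n := by
  rw [R, ← card_univ_lt i]
  congr 1
  ext a
  simp only [mem_filter, mem_univ, true_and, and_iff_left_iff_imp]
  omega

lemma R_big (w : Equiv.Perm (Fin n)) (i j : ℕ) (hj : n < j) : R w i j = 0 := by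
  rw [R, Finset.card_eq_zero]
  ext a
  simp only [mem_filter, mem_univ, true_and, Finset.notMem_empty, iff_false, not_and]
  intro _
  have := (w a).isLt
  omega

lemma R_zero (w : Equiv.Perm (Fin n)) (j : ℕ) : R w 0 j = 0 := by
  rw [R, Finset.card_eq_zero]
  ext a
  simp

lemma R_min (w : Equiv.Perm (Fin n)) (i j : ℕ) : R w i j = R w (min i n) j := by
  unfold R
  congr 1
  ext a
  have := a.isLt
  simp only [mem_filter, mem_univ, true_and, lt_min_iff]
  omega

/-- symmetry of rank matrix under transpose, for involutions -/
lemma R_symm (w : Equiv.Perm (Fin n)) (hw : w * w = 1) (i j : ℕ) (hj : 1 ≤ j) :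
    R w i j + min (j - 1) n = min i n + R w (j - 1) (i + 1) := by
  set j' := j - 1 with hj'
  -- B := #{a : (w a).val < i ∧ j' ≤ a.val}
  have e1 : (univ.filter fun a : Fin n => a.val < i ∧ j ≤ (w a).val + 1)
      = (univ.filter fun a : Fin n => a.val < i ∧ j' ≤ (w a).val) := by
    ext a; simp only [mem_filter, mem_univ, true_and]; omega
  have h1 : R w i j = (univ.filter fun a : Fin n => (w a).val < i ∧ j' ≤ a.val).card := by
    rw [R, e1]
    exact card_swap w hw (fun a b => a.val < i ∧ j' ≤ b.val)
  -- split #{(w a) < i} by j' ≤ a.val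
  have h2 : (univ.filter fun a : Fin n => (w a).val < i ∧ ¬ j' ≤ a.val).card
      + (univ.filter fun a : Fin n => (w a).val < i ∧ j' ≤ a.val).card
      = min i n := by
    rw [Nat.add_comm, split (fun a : Fin n => (w a).val < i) (fun a : Fin n => j' ≤ a.val),
      show (univ.filter fun a : Fin n => (w a).val < i).card
        = (univ.filter fun a : Fin n => a.val < i).card from
        card_swap w hw (fun a b => b.val < i), card_univ_lt]
  -- split #{a < j'} by (w a).val < i
  have h3 : (univ.filter fun a : Fin n => a.val < j' ∧ (w a).val < i).card
      + (univ.filter fun a : Fin n => a.val < j' ∧ ¬ (w a).val < i).card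
      = min j' n := by
    rw [split (fun a : Fin n => a.val < j') (fun a : Fin n => (w a).val < i), card_univ_lt]
  have h4 : R w j' (i + 1) = (univ.filter fun a : Fin n => a.val < j' ∧ ¬ (w a).val < i).card := by
    rw [R]; congr 1; ext a
    simp only [mem_filter, mem_univ, true_and]
    omega
  have h5 : (univ.filter fun a : Fin n => (w a).val < i ∧ ¬ j' ≤ a.val).card
      = (univ.filter fun a : Fin n => a.val < j' ∧ (w a).val < i).card := by
    congr 1; ext a
    simp only [mem_filter, mem_univ, true_and]
    omega
  omega

lemma dot_add (w : Equiv.Perm (Fin n)) (hw : w * w = 1) (i : ℕ) :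
    dotRank w i + R w i (i + 1) = min i n := by
  have hdot : dotRank w i
      = (univ.filter fun a : Fin n => a.val < i ∧ (w a).val = a.val).card
        + 2 * (univ.filter fun a : Fin n => a.val < i ∧ (w a).val < a.val).card := by
    have e1 : (univ.filter fun a : Fin n => a.val < i ∧ w a = a)
        = (univ.filter fun a : Fin n => a.val < i ∧ (w a).val = a.val) := by
      ext a; simp only [mem_filter, mem_univ, true_and, Fin.val_eq_val]
    have e2 : (univ.filter fun a : Fin n => a.val < i ∧ w a < a)
        = (univ.filter fun a : Fin n => a.val < i ∧ (w a).val < a.val) := by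
      ext a; simp only [mem_filter, mem_univ, true_and, Fin.lt_def]
    rw [dotRank, e1, e2]
  -- split all of {a < i} by whether (w a).val < i
  have h1 : (univ.filter fun a : Fin n => a.val < i ∧ (w a).val < i).card
      + (univ.filter fun a : Fin n => a.val < i ∧ ¬ (w a).val < i).card
      = min i n := by
    rw [split (fun a : Fin n => a.val < i) (fun a : Fin n => (w a).val < i), card_univ_lt]
  have h2 : R w i (i + 1) = (univ.filter fun a : Fin n => a.val < i ∧ ¬ (w a).val < i).card := by
    rw [R]; congr 1; ext a; simp only [mem_filter, mem_univ, true_and]; omega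
  -- split by (w a).val < a.val
  have h3 : (univ.filter fun a : Fin n => (a.val < i ∧ (w a).val < i) ∧ (w a).val < a.val).card
      + (univ.filter fun a : Fin n => (a.val < i ∧ (w a).val < i) ∧ ¬ (w a).val < a.val).card
      = (univ.filter fun a : Fin n => a.val < i ∧ (w a).val < i).card :=
    split _ _
  have h3' : (univ.filter fun a : Fin n => (a.val < i ∧ (w a).val < i) ∧ (w a).val < a.val)
      = (univ.filter fun a : Fin n => a.val < i ∧ (w a).val < a.val) := by
    ext a; simp only [mem_filter, mem_univ, true_and]; omega
  -- split the rest by (w a).val = a.val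
  have h4 : (univ.filter fun a : Fin n =>
        ((a.val < i ∧ (w a).val < i) ∧ ¬ (w a).val < a.val) ∧ (w a).val = a.val).card
      + (univ.filter fun a : Fin n =>
        ((a.val < i ∧ (w a).val < i) ∧ ¬ (w a).val < a.val) ∧ ¬ (w a).val = a.val).card
      = (univ.filter fun a : Fin n => (a.val < i ∧ (w a).val < i) ∧ ¬ (w a).val < a.val).card :=
    split _ _
  have h4' : (univ.filter fun a : Fin n =>
        ((a.val < i ∧ (w a).val < i) ∧ ¬ (w a).val < a.val) ∧ (w a).val = a.val)
      = (univ.filter fun a : Fin n => a.val < i ∧ (w a).val = a.val) := by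
    ext a; simp only [mem_filter, mem_univ, true_and]; omega
  have h4'' : (univ.filter fun a : Fin n =>
        ((a.val < i ∧ (w a).val < i) ∧ ¬ (w a).val < a.val) ∧ ¬ (w a).val = a.val)
      = (univ.filter fun a : Fin n => a.val < i ∧ a.val < (w a).val ∧ (w a).val < i) := by
    ext a; simp only [mem_filter, mem_univ, true_and]; omega
  -- the "upper half of inner pairs" equals the "lower half", by the involution
  have h5 : (univ.filter fun a : Fin n => a.val < i ∧ a.val < (w a).val ∧ (w a).val < i).card
      = (univ.filter fun a : Fin n => a.val < i ∧ (w a).val < a.val).card := by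
    rw [card_swap w hw (fun a b => a.val < i ∧ a.val < b.val ∧ b.val < i)]
    congr 1; ext a; simp only [mem_filter, mem_univ, true_and]; omega
  rw [h3'] at h3
  rw [h4', h4''] at h4
  omega

lemma pair_eq (w : Equiv.Perm (Fin n)) (s t : ℕ) (hst : s < t) :
    pairRank w s t = R w s (t + 1) := by
  rw [pairRank, R]
  congr 1
  ext a
  simp only [mem_filter, mem_univ, true_and, Fin.lt_def]
  omega


/-- two involutions `γ, τ ∈ S_n` satisfy `γ ≤ τ` in Bruhat order iff
`γ(i;·) ≥ τ(i;·)` for all `i` and `γ(s;t) ≤ τ(s;t)` for all `s < t`. -/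
theorem bruhat_order_involutions {n : ℕ} (γ τ : Equiv.Perm (Fin n))
    (hγ : γ * γ = 1) (hτ : τ * τ = 1) :
    bruhatLE γ τ ↔
      ((∀ i, 1 ≤ i → i ≤ n → dotRank τ i ≤ dotRank γ i) ∧
       (∀ s t, 1 ≤ s → s < t → t ≤ n → pairRank γ s t ≤ pairRank τ s t)) := by
  constructor
  · intro h
    constructor
    · intro i _ _
      have hR : R γ i (i + 1) ≤ R τ i (i + 1) := h i (i + 1)
      have dγ := dot_add γ hγ i
      have dτ := dot_add τ hτ i
      omega
    · intro s t _ hst _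
      rw [pair_eq γ s t hst, pair_eq τ s t hst]
      exact h s (t + 1)
  · rintro ⟨hd, hp⟩ i j
    show R γ i j ≤ R τ i j
    rw [R_min γ, R_min τ]
    set i' := min i n with hi'
    have hi'n : i' ≤ n := min_le_right i n
    rcases le_or_gt j 1 with hj | hj
    · rw [R_le_one γ _ _ hj, R_le_one τ _ _ hj]
    rcases le_or_gt j (n + 1) with hjn | hjn
    · rcases Nat.lt_trichotomy j (i' + 1) with hcmp | hcmp | hcmp
      · -- j ≤ i' : use symmetry
        have sγ := R_symm γ hγ i' j (by omega)
        have sτ := R_symm τ hτ i' j (by omega)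
        have key := hp (j - 1) i' (by omega) (by omega) hi'n
        rw [pair_eq γ _ _ (by omega), pair_eq τ _ _ (by omega)] at key
        omega
      · -- j = i' + 1 : diagonal, use dotRank condition
        have hdi := hd i' (by omega) hi'n
        have dγ := dot_add γ hγ i'
        have dτ := dot_add τ hτ i'
        have hR : R γ i' (i' + 1) ≤ R τ i' (i' + 1) := by omega
        rwa [hcmp]
      · -- j ≥ i' + 2 : strictly above diagonal
        rcases Nat.eq_zero_or_pos i' with h0 | h0
        · rw [h0, R_zero, R_zero]
        have key := hp i' (j - 1) h0 (by omega) (by omega)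
        rw [pair_eq γ _ _ (by omega), pair_eq τ _ _ (by omega)] at key
        have e : j - 1 + 1 = j := by omega
        rwa [e] at key
    · rw [R_big γ _ _ (by omega), R_big τ _ _ (by omega)]
end

section
/- For (p,q)-clans γ and τ: γ ≤ τ in the combinatorial Bruhat order on clans if and only if (1) the underlying involutions of γ and τ are related (underlying involution of γ ≤ underlying involution of τ) in the Bruhat order on S_n, and (2) γ(i;+) ≥ τ(i;+) and γ(i;-) ≥ τ(i;-) for all i = 1,...,n. -/
open Finset

namespace ClanAux

variable {p q : ℕ}

/-- `Qc w i j` = number of `a < i` with `w a < j`. -/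
def Qc {n : ℕ} (w : Equiv.Perm (Fin n)) (i j : ℕ) : ℕ :=
  (Finset.univ.filter fun a : Fin n => a.val < i ∧ (w a).val < j).card

/-- `Rb w i j` = the rank-matrix count used in `bruhatLE`. -/
def Rb {n : ℕ} (w : Equiv.Perm (Fin n)) (i j : ℕ) : ℕ :=
  (Finset.univ.filter fun a : Fin n => a.val < i ∧ j ≤ (w a).val + 1).card

lemma winv (γ : Clan p q) (w : Equiv.Perm (Fin (p+q)))
    (hw1 : ∀ a b, γ.c a = Sum.inr b → w a = b)
    (hw2 : ∀ a s, γ.c a = Sum.inl s → w a = a) (a : Fin (p+q)) : w (w a) = a := by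
  cases h : γ.c a with
  | inl s => rw [hw2 a s h, hw2 a s h]
  | inr b => rw [hw1 a b h, hw1 b a (γ.mate_mate a b h)]

lemma Qc_symm {n : ℕ} (w : Equiv.Perm (Fin n)) (hwinv : ∀ a, w (w a) = a) (i j : ℕ) :
    Qc w i j = Qc w j i := by
  unfold Qc
  apply Finset.card_bij' (fun a _ => w a) (fun a _ => w a)
  · intro a ha
    simp only [mem_filter, mem_univ, true_and] at ha ⊢
    exact ⟨ha.2, by rw [hwinv]; exact ha.1⟩
  · intro a ha
    simp only [mem_filter, mem_univ, true_and] at ha ⊢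
    exact ⟨ha.2, by rw [hwinv]; exact ha.1⟩
  · intro a _; exact hwinv a
  · intro a _; exact hwinv a

lemma Qc_add_rankPair (γ : Clan p q) (w : Equiv.Perm (Fin (p+q)))
    (hw1 : ∀ a b, γ.c a = Sum.inr b → w a = b)
    (hw2 : ∀ a s, γ.c a = Sum.inl s → w a = a) {i j : ℕ} (hij : i ≤ j) :
    Qc w i j + γ.rankPair i j
      = (Finset.univ.filter fun a : Fin (p+q) => a.val < i).card := by
  classical
  have h := Finset.card_filter_add_card_filter_not
    (s := Finset.univ.filter fun a : Fin (p+q) => a.val < i) (fun a => (w a).val < j)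
  rw [Finset.filter_filter, Finset.filter_filter] at h
  rw [← h]
  unfold Qc Clan.rankPair
  congr 1
  refine congrArg Finset.card (Finset.filter_congr ?_)
  intro a _
  constructor
  · rintro ⟨hai, b, hb, hjb⟩
    exact ⟨hai, by rw [hw1 a b hb]; omega⟩
  · rintro ⟨hai, hj'⟩
    refine ⟨hai, ?_⟩
    cases hc : γ.c a with
    | inl s => exact absurd (by rw [hw2 a s hc]; omega : (w a).val < j) hj'
    | inr b => exact ⟨b, rfl, by rw [← hw1 a b hc]; omega⟩

lemma Qc_eq (γ : Clan p q) (w : Equiv.Perm (Fin (p+q)))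
    (hw1 : ∀ a b, γ.c a = Sum.inr b → w a = b)
    (hw2 : ∀ a s, γ.c a = Sum.inl s → w a = a) (i : ℕ) :
    Qc w i i = γ.rankPlus i + γ.rankMinus i := by
  classical
  have hwinv := winv γ w hw1 hw2
  have h1 := Finset.card_filter_add_card_filter_not
    (s := Finset.univ.filter fun a : Fin (p+q) => a.val < i ∧ (w a).val < i)
    (fun a => γ.c a = Sum.inl true)
  rw [Finset.filter_filter, Finset.filter_filter] at h1
  have e1 : (Finset.univ.filter fun a : Fin (p+q) =>
      (a.val < i ∧ (w a).val < i) ∧ γ.c a = Sum.inl true)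
      = Finset.univ.filter fun a : Fin (p+q) => a.val < i ∧ γ.c a = Sum.inl true := by
    apply Finset.filter_congr; intro a _
    constructor
    · rintro ⟨⟨h, _⟩, h'⟩; exact ⟨h, h'⟩
    · rintro ⟨h, h'⟩; exact ⟨⟨h, by rw [hw2 a true h']; exact h⟩, h'⟩
  have h2 := Finset.card_filter_add_card_filter_not
    (s := Finset.univ.filter fun a : Fin (p+q) =>
      (a.val < i ∧ (w a).val < i) ∧ ¬ γ.c a = Sum.inl true)
    (fun a => γ.c a = Sum.inl false)
  rw [Finset.filter_filter, Finset.filter_filter] at h2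
  have e2 : (Finset.univ.filter fun a : Fin (p+q) =>
      ((a.val < i ∧ (w a).val < i) ∧ ¬ γ.c a = Sum.inl true) ∧ γ.c a = Sum.inl false)
      = Finset.univ.filter fun a : Fin (p+q) => a.val < i ∧ γ.c a = Sum.inl false := by
    apply Finset.filter_congr; intro a _
    constructor
    · rintro ⟨⟨⟨h, _⟩, _⟩, h'⟩; exact ⟨h, h'⟩
    · rintro ⟨h, h'⟩
      exact ⟨⟨⟨h, by rw [hw2 a false h']; exact h⟩, by simp [h']⟩, h'⟩
  have e3 : (Finset.univ.filter fun a : Fin (p+q) =>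
      (((a.val < i ∧ (w a).val < i) ∧ ¬ γ.c a = Sum.inl true) ∧ ¬ γ.c a = Sum.inl false))
      = Finset.univ.filter fun a : Fin (p+q) =>
          a.val < i ∧ ∃ b, γ.c a = Sum.inr b ∧ b.val < i := by
    apply Finset.filter_congr; intro a _
    constructor
    · rintro ⟨⟨⟨h, hwi⟩, ht⟩, hf⟩
      cases hc : γ.c a with
      | inl s =>
        cases s with
        | true => exact absurd hc ht
        | false => exact absurd hc hf
      | inr b => exact ⟨h, b, rfl, by rw [← hw1 a b hc]; exact hwi⟩
    · rintro ⟨h, b, hb, hbi⟩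
      refine ⟨⟨⟨h, by rw [hw1 a b hb]; exact hbi⟩, ?_⟩, ?_⟩ <;> simp [hb]
  have h3 := Finset.card_filter_add_card_filter_not
    (s := Finset.univ.filter fun a : Fin (p+q) =>
      a.val < i ∧ ∃ b, γ.c a = Sum.inr b ∧ b.val < i)
    (fun a => w a < a)
  rw [Finset.filter_filter, Finset.filter_filter] at h3
  have e4 : (Finset.univ.filter fun a : Fin (p+q) =>
      (a.val < i ∧ ∃ b, γ.c a = Sum.inr b ∧ b.val < i) ∧ w a < a)
      = Finset.univ.filter fun a : Fin (p+q) =>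
          a.val < i ∧ ∃ b, γ.c a = Sum.inr b ∧ b < a := by
    apply Finset.filter_congr; intro a _
    constructor
    · rintro ⟨⟨h, b, hb, _⟩, hlt⟩
      exact ⟨h, b, hb, by rw [← hw1 a b hb]; exact hlt⟩
    · rintro ⟨h, b, hb, hba⟩
      have hba' : b.val < a.val := hba
      exact ⟨⟨h, b, hb, by omega⟩, by rw [hw1 a b hb]; exact hba⟩
  have e5 : (Finset.univ.filter fun a : Fin (p+q) =>
      (a.val < i ∧ ∃ b, γ.c a = Sum.inr b ∧ b.val < i) ∧ ¬ w a < a).card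
      = (Finset.univ.filter fun a : Fin (p+q) =>
          a.val < i ∧ ∃ b, γ.c a = Sum.inr b ∧ b < a).card := by
    apply Finset.card_bij' (fun a _ => w a) (fun a _ => w a)
    · intro a ha
      simp only [mem_filter, mem_univ, true_and] at ha ⊢
      obtain ⟨⟨hai, b, hb, hbi⟩, hnlt⟩ := ha
      have hwa : w a = b := hw1 a b hb
      have hne : a ≠ b := γ.mate_ne a b hb
      have hab : a < b := by
        rw [hwa] at hnlt
        exact lt_of_le_of_ne (not_lt.mp hnlt) hne
      rw [hwa]
      exact ⟨hbi, a, γ.mate_mate a b hb, hab⟩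
    · intro a ha
      simp only [mem_filter, mem_univ, true_and] at ha ⊢
      obtain ⟨hai, b, hb, hba⟩ := ha
      have hwa : w a = b := hw1 a b hb
      have hba' : b.val < a.val := hba
      rw [hwa]
      refine ⟨⟨by omega, ⟨a, γ.mate_mate a b hb, by omega⟩⟩, ?_⟩
      rw [hw1 b a (γ.mate_mate a b hb)]
      exact not_lt.mpr (le_of_lt hba)
    · intro a _; exact hwinv a
    · intro a _; exact hwinv a
  unfold Qc Clan.rankPlus Clan.rankMinus
  rw [← h1, e1, ← h2, e2, e3, ← h3, e4, e5]
  omega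

lemma Rb_add_Qc {n : ℕ} (w : Equiv.Perm (Fin n)) (i j : ℕ) :
    Rb w i (j+1) + Qc w i j
      = (Finset.univ.filter fun a : Fin n => a.val < i).card := by
  classical
  have h := Finset.card_filter_add_card_filter_not
    (s := Finset.univ.filter fun a : Fin n => a.val < i) (fun a => j + 1 ≤ (w a).val + 1)
  rw [Finset.filter_filter, Finset.filter_filter] at h
  rw [← h]
  unfold Rb Qc
  congr 1
  refine congrArg Finset.card (Finset.filter_congr ?_)
  intro a _
  constructor
  · rintro ⟨h1, h2⟩; exact ⟨h1, by omega⟩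
  · rintro ⟨h1, h2⟩; exact ⟨h1, by omega⟩

lemma bruhat_iff {n : ℕ} (u v : Equiv.Perm (Fin n)) :
    bruhatLE u v ↔ ∀ i j, Qc v i j ≤ Qc u i j := by
  constructor
  · intro h i j
    have hu := Rb_add_Qc u i j
    have hv := Rb_add_Qc v i j
    have hb := h i (j+1)
    unfold Rb at hu hv
    omega
  · intro h i j
    cases j with
    | zero =>
      have e : ∀ w : Equiv.Perm (Fin n),
          (Finset.univ.filter fun a : Fin n => a.val < i ∧ (0:ℕ) ≤ (w a).val + 1)
            = Finset.univ.filter fun a : Fin n => a.val < i := by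
        intro w; apply Finset.filter_congr; intro a _; simp
      rw [e u, e v]
    | succ j' =>
      have hu := Rb_add_Qc u i j'
      have hv := Rb_add_Qc v i j'
      have hq := h i j'
      unfold Rb at hu hv
      omega

lemma rankPlus_stab (γ : Clan p q) {i : ℕ} (h : p + q ≤ i) :
    γ.rankPlus i = γ.rankPlus (p+q) := by
  unfold Clan.rankPlus
  congr 1 <;>
    refine congrArg Finset.card (Finset.filter_congr fun a _ => ?_) <;>
    have := a.isLt <;>
    constructor <;> rintro ⟨_, h2⟩ <;> exact ⟨by omega, h2⟩

lemma rankMinus_stab (γ : Clan p q) {i : ℕ} (h : p + q ≤ i) :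
    γ.rankMinus i = γ.rankMinus (p+q) := by
  unfold Clan.rankMinus
  congr 1 <;>
    refine congrArg Finset.card (Finset.filter_congr fun a _ => ?_) <;>
    have := a.isLt <;>
    constructor <;> rintro ⟨_, h2⟩ <;> exact ⟨by omega, h2⟩

lemma rankPlus_zero (γ : Clan p q) : γ.rankPlus 0 = 0 := by
  simp [Clan.rankPlus]

lemma rankMinus_zero (γ : Clan p q) : γ.rankMinus 0 = 0 := by
  simp [Clan.rankMinus]

lemma rank_zero_of (γ : Clan p q) (hn : p + q = 0) (i : ℕ) :
    γ.rankPlus i = 0 ∧ γ.rankMinus i = 0 := by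
  have he : (Finset.univ : Finset (Fin (p+q))) = ∅ :=
    Finset.univ_eq_empty_iff.mpr (Fintype.card_eq_zero_iff.mp (by simp [hn]))
  unfold Clan.rankPlus Clan.rankMinus
  rw [he]
  simp

end ClanAux

/-- for `(p,q)`-clans `γ, τ` with underlying involutions `wγ, wτ`,
`γ ≤ τ` in the combinatorial Bruhat order iff `wγ ≤ wτ` in Bruhat order and
`γ(i;±) ≥ τ(i;±)` for all `i`. -/
theorem clan_le_iff_involutions_and_signs {p q : ℕ} (γ τ : Clan p q)
    (wγ wτ : Equiv.Perm (Fin (p + q)))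
    (hwγ1 : ∀ a b, γ.c a = Sum.inr b → wγ a = b)
    (hwγ2 : ∀ a s, γ.c a = Sum.inl s → wγ a = a)
    (hwτ1 : ∀ a b, τ.c a = Sum.inr b → wτ a = b)
    (hwτ2 : ∀ a s, τ.c a = Sum.inl s → wτ a = a) :
    Clan.le γ τ ↔
      (bruhatLE wγ wτ ∧
        ∀ i, 1 ≤ i → i ≤ p + q →
          (τ.rankPlus i ≤ γ.rankPlus i ∧ τ.rankMinus i ≤ γ.rankMinus i)) := by
  have hγinv := ClanAux.winv γ wγ hwγ1 hwγ2
  have hτinv := ClanAux.winv τ wτ hwτ1 hwτ2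
  constructor
  · rintro ⟨h1, h2, h3⟩
    refine ⟨?_, fun i _ _ => ⟨h1 i, h2 i⟩⟩
    rw [ClanAux.bruhat_iff]
    have key : ∀ i j, i ≤ j → ClanAux.Qc wτ i j ≤ ClanAux.Qc wγ i j := by
      intro i j hij
      rcases eq_or_lt_of_le hij with rfl | hlt
      · rw [ClanAux.Qc_eq γ wγ hwγ1 hwγ2, ClanAux.Qc_eq τ wτ hwτ1 hwτ2]
        exact add_le_add (h1 i) (h2 i)
      · have aγ := ClanAux.Qc_add_rankPair γ wγ hwγ1 hwγ2 hij
        have aτ := ClanAux.Qc_add_rankPair τ wτ hwτ1 hwτ2 hij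
        have := h3 i j hlt
        omega
    intro i j
    rcases le_total i j with hij | hji
    · exact key i j hij
    · rw [ClanAux.Qc_symm wτ hτinv, ClanAux.Qc_symm wγ hγinv]
      exact key j i hji
  · rintro ⟨hb, hs⟩
    rw [ClanAux.bruhat_iff] at hb
    have hplus : ∀ i, τ.rankPlus i ≤ γ.rankPlus i := by
      intro i
      rcases Nat.eq_zero_or_pos i with rfl | hi
      · rw [ClanAux.rankPlus_zero, ClanAux.rankPlus_zero]
      · rcases le_or_gt i (p+q) with h | h
        · exact (hs i hi h).1
        · rcases Nat.eq_zero_or_pos (p+q) with hn | hn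
          · have e1 := (ClanAux.rank_zero_of τ hn i).1
            have e2 := (ClanAux.rank_zero_of γ hn i).1
            omega
          · rw [ClanAux.rankPlus_stab γ (le_of_lt h), ClanAux.rankPlus_stab τ (le_of_lt h)]
            exact (hs (p+q) hn le_rfl).1
    have hminus : ∀ i, τ.rankMinus i ≤ γ.rankMinus i := by
      intro i
      rcases Nat.eq_zero_or_pos i with rfl | hi
      · rw [ClanAux.rankMinus_zero, ClanAux.rankMinus_zero]
      · rcases le_or_gt i (p+q) with h | h
        · exact (hs i hi h).2
        · rcases Nat.eq_zero_or_pos (p+q) with hn | hn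
          · have e1 := (ClanAux.rank_zero_of τ hn i).2
            have e2 := (ClanAux.rank_zero_of γ hn i).2
            omega
          · rw [ClanAux.rankMinus_stab γ (le_of_lt h), ClanAux.rankMinus_stab τ (le_of_lt h)]
            exact (hs (p+q) hn le_rfl).2
    refine ⟨hplus, hminus, ?_⟩
    intro i j hij
    have aγ := ClanAux.Qc_add_rankPair γ wγ hwγ1 hwγ2 (le_of_lt hij)
    have aτ := ClanAux.Qc_add_rankPair τ wτ hwτ1 hwτ2 (le_of_lt hij)
    have := hb i j
    omega
end

section
/- Let γ be a (p,q)-clan containing a + at position r and a - at position s with r < s, and let γ' be the clan obtained by replacing these two signs with a new pair of matching natural numbers. Then the rank numbers change exactly as follows: γ'(k;+) = γ(k;+) - 1 for all k with r ≤ k < s; γ'(k;-) = γ(k;-) for all k; γ'(k;l) = γ(k;l) + 1 whenever r ≤ k < l < s; and all other rank numbers are unchanged. In particular γ < γ' in the combinatorial Bruhat order. -/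
open Finset

/-!
Every rank number counts the positions `a` satisfying a condition on `a` and its entry
`c a`. The move changes the entries at `r` and `s` only, so each rank number changes by the
contributions of these two positions: `r` stops being a `+` (seen by `γ(k;+)` once `r < k`),
`s` stops being a `-` but closes a pair (so `γ(k;-)` is unchanged and `γ(k;+)` regains one
once `s < k`), and `r` opens a pair that crosses from `≤ k` to `≥ l` exactly when
`r < k` and `l ≤ s`.
-/

theorem Finset.card_filter_add_sum_eq_of_iff_of_notMem {α : Type*} [Fintype α]
    [DecidableEq α] {P Q : α → Prop} [DecidablePred P] [DecidablePred Q] (S : Finset α)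
    (h : ∀ a ∉ S, P a ↔ Q a) :
    #(univ.filter P) + ∑ a ∈ S, (if Q a then 1 else 0)
      = #(univ.filter Q) + ∑ a ∈ S, (if P a then 1 else 0) := by
  have hcompl : ∑ a ∈ Sᶜ, (if P a then 1 else 0) = ∑ a ∈ Sᶜ, (if Q a then 1 else 0) :=
    sum_congr rfl fun a ha => by rw [if_congr (h a (mem_compl.mp ha)) rfl rfl]
  rw [card_filter, card_filter, ← sum_add_sum_compl S, ← sum_add_sum_compl S
    (fun a => if Q a then 1 else 0), hcompl]
  ring

namespace Clan

variable {p q : ℕ} {γ γ' : Clan p q} {r s : Fin (p + q)}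

theorem card_filter_add_ite_eq_of_eq_off (hne : r ≠ s)
    (hother : ∀ a, a ≠ r → a ≠ s → γ'.c a = γ.c a)
    (F : Bool ⊕ Fin (p + q) → Fin (p + q) → Prop) [∀ x a, Decidable (F x a)] :
    #(univ.filter fun a => F (γ'.c a) a)
        + (if F (γ.c r) r then 1 else 0) + (if F (γ.c s) s then 1 else 0)
      = #(univ.filter fun a => F (γ.c a) a)
        + (if F (γ'.c r) r then 1 else 0) + (if F (γ'.c s) s then 1 else 0) := by
  have key := card_filter_add_sum_eq_of_iff_of_notMem
    (P := fun a => F (γ'.c a) a) (Q := fun a => F (γ.c a) a) {r, s} fun a ha => by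
      simp only [mem_insert, mem_singleton, not_or] at ha
      rw [hother a ha.1 ha.2]
  simpa only [sum_pair hne, add_assoc] using key

variable (hrs : r < s) (hr : γ.c r = Sum.inl true) (hs : γ.c s = Sum.inl false)
  (hr' : γ'.c r = Sum.inr s) (hs' : γ'.c s = Sum.inr r)
  (hother : ∀ a, a ≠ r → a ≠ s → γ'.c a = γ.c a)
include hrs hr hs hr' hs' hother

theorem rankPlus_move (k : ℕ) :
    γ'.rankPlus k + (if r.val < k then 1 else 0)
      = γ.rankPlus k + (if s.val < k then 1 else 0) := by
  have hsigns := card_filter_add_ite_eq_of_eq_off hrs.ne hother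
    fun x a => a.val < k ∧ x = Sum.inl true
  have hpairs := card_filter_add_ite_eq_of_eq_off hrs.ne hother
    fun x a => a.val < k ∧ ∃ b, x = Sum.inr b ∧ b < a
  simp only [hr, hs, hr', hs', Sum.inl.injEq, Sum.inr.injEq, reduceCtorEq, and_false,
    false_and, exists_eq_left', exists_false, not_lt_of_gt hrs, hrs, and_true, if_false,
    add_zero] at hsigns hpairs
  unfold rankPlus
  omega

theorem rankMinus_move (k : ℕ) : γ'.rankMinus k = γ.rankMinus k := by
  have hsigns := card_filter_add_ite_eq_of_eq_off hrs.ne hother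
    fun x a => a.val < k ∧ x = Sum.inl false
  have hpairs := card_filter_add_ite_eq_of_eq_off hrs.ne hother
    fun x a => a.val < k ∧ ∃ b, x = Sum.inr b ∧ b < a
  simp only [hr, hs, hr', hs', Sum.inl.injEq, Sum.inr.injEq, reduceCtorEq, and_false,
    false_and, exists_eq_left', exists_false, not_lt_of_gt hrs, hrs, and_true, if_false,
    add_zero] at hsigns hpairs
  unfold rankMinus
  omega

theorem rankPair_move {k l : ℕ} (hkl : k < l) :
    γ'.rankPair k l = γ.rankPair k l + (if r.val < k ∧ l ≤ s.val then 1 else 0) := by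
  have hcross := card_filter_add_ite_eq_of_eq_off hrs.ne hother
    fun x a => a.val < k ∧ ∃ b, x = Sum.inr b ∧ l ≤ b.val
  have hs_not_cross : ¬(s.val < k ∧ l ≤ r.val) := by
    have : r.val < s.val := hrs
    omega
  simp only [hr, hs, hr', hs', Sum.inr.injEq, reduceCtorEq, and_false, false_and,
    exists_eq_left', exists_false, if_false, add_zero, hs_not_cross] at hcross
  unfold rankPair
  omega

end Clan

/-- the move `+- → 11` (a `+` at position `r`, a `-` at position
`s > r`, replaced by a matching pair) changes rank numbers exactly as stated,
and yields `γ < γ'` in the combinatorial Bruhat order. -/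
theorem clan_move_plusminus {p q : ℕ} (γ γ' : Clan p q) (r s : Fin (p + q))
    (hrs : r < s)
    (hr : γ.c r = Sum.inl true) (hs : γ.c s = Sum.inl false)
    (hr' : γ'.c r = Sum.inr s) (hs' : γ'.c s = Sum.inr r)
    (hother : ∀ a, a ≠ r → a ≠ s → γ'.c a = γ.c a) :
    (∀ k, r.val < k → k ≤ s.val → γ'.rankPlus k + 1 = γ.rankPlus k) ∧
    (∀ k, γ'.rankMinus k = γ.rankMinus k) ∧
    (∀ k l, k < l → r.val < k → l ≤ s.val → γ'.rankPair k l = γ.rankPair k l + 1) ∧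
    (∀ k, ¬(r.val < k ∧ k ≤ s.val) → γ'.rankPlus k = γ.rankPlus k) ∧
    (∀ k l, k < l → ¬(r.val < k ∧ l ≤ s.val) → γ'.rankPair k l = γ.rankPair k l) ∧
    Clan.lt γ γ' := by
  have hrsv : r.val < s.val := hrs
  have hplus := Clan.rankPlus_move hrs hr hs hr' hs' hother
  have hminus := Clan.rankMinus_move hrs hr hs hr' hs' hother
  have hpair := fun k l (hkl : k < l) => Clan.rankPair_move hrs hr hs hr' hs' hother hkl
  have hle : Clan.le γ γ' := by
    refine ⟨fun k => ?_, fun k => (hminus k).le, fun k l hkl => ?_⟩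
    · have := hplus k
      split_ifs at this <;> omega
    · rw [hpair k l hkl]
      omega
  refine ⟨fun k hrk hks => ?_, hminus, fun k l hkl hrk hls => ?_, fun k hk => ?_,
    fun k l hkl hkls => ?_, hle, fun hle' => ?_⟩
  · have := hplus k
    rw [if_pos hrk, if_neg (by omega)] at this
    exact this
  · rw [hpair k l hkl, if_pos ⟨hrk, hls⟩]
  · have := hplus k
    split_ifs at this <;> omega
  · rw [hpair k l hkl, if_neg hkls, add_zero]
  · have hdrop := hplus (r.val + 1)
    rw [if_pos (by omega), if_neg (by omega)] at hdrop
    have := hle'.1 (r.val + 1)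
    omega
end

section
/- Let γ be a (p,q)-clan with a pair of matching natural numbers at positions i < j and a + sign at position k with j < k, and let γ' be obtained by interchanging the characters at positions j and k (pattern 11+ → 1+1). Then γ'(s;-) = γ(s;-) - 1 for all s with j ≤ s < k, γ'(s;t) = γ(s;t) + 1 for all pairs s < t with i ≤ s and j ≤ t < k, and all other rank numbers are unchanged. In particular γ < γ' in the combinatorial Bruhat order. -/
open Finset

lemma card_filter_three {n : ℕ} (i j k : Fin n) (hij : i ≠ j) (hik : i ≠ k) (hjk : j ≠ k)
    (P P' : Fin n → Prop) [DecidablePred P] [DecidablePred P']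
    (h : ∀ a, a ≠ i → a ≠ j → a ≠ k → (P a ↔ P' a)) :
    (univ.filter P).card
        + ((if P' i then 1 else 0) + (if P' j then 1 else 0) + (if P' k then 1 else 0))
      = (univ.filter P').card
        + ((if P i then 1 else 0) + (if P j then 1 else 0) + (if P k then 1 else 0)) := by
  classical
  have hsub : ({i, j, k} : Finset (Fin n)) ⊆ univ := subset_univ _
  have hsum : ∀ (Q : Fin n → Prop) (_ : DecidablePred Q),
      (univ.filter Q).card
        = (∑ a ∈ univ \ {i, j, k}, (if Q a then 1 else 0))
          + ((if Q i then 1 else 0) + (if Q j then 1 else 0) + (if Q k then 1 else 0)) := by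
    intro Q _
    rw [Finset.card_filter, ← Finset.sum_sdiff hsub]
    congr 1
    rw [show ({i, j, k} : Finset (Fin n)) = insert i (insert j {k}) from rfl,
      Finset.sum_insert (by simp [hij, hik]), Finset.sum_insert (by simp [hjk]),
      Finset.sum_singleton]
    ring
  rw [hsum P inferInstance, hsum P' inferInstance]
  have hrest : (∑ a ∈ univ \ {i, j, k}, (if P a then 1 else 0))
      = ∑ a ∈ univ \ {i, j, k}, (if P' a then 1 else 0) := by
    apply Finset.sum_congr rfl
    intro a ha
    simp only [Finset.mem_sdiff, Finset.mem_insert, Finset.mem_singleton] at ha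
    push_neg at ha
    simp [h a ha.2.1 ha.2.2.1 ha.2.2.2]
  rw [hrest]
  ring


/-- the move `11+ → 1+1` (pair at `i < j`, `+` at `k > j`,
re-paired as `i,k` with `+` at `j`) changes rank numbers exactly as stated,
and yields `γ < γ'` in the combinatorial Bruhat order. -/
theorem clan_move_pair_plus {p q : ℕ} (γ γ' : Clan p q) (i j k : Fin (p + q))
    (hij : i < j) (hjk : j < k)
    (hi : γ.c i = Sum.inr j) (hj : γ.c j = Sum.inr i) (hk : γ.c k = Sum.inl true)
    (hi' : γ'.c i = Sum.inr k) (hk' : γ'.c k = Sum.inr i) (hj' : γ'.c j = Sum.inl true)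
    (hother : ∀ a, a ≠ i → a ≠ j → a ≠ k → γ'.c a = γ.c a) :
    (∀ s, j.val < s → s ≤ k.val → γ'.rankMinus s + 1 = γ.rankMinus s) ∧
    (∀ s, ¬(j.val < s ∧ s ≤ k.val) → γ'.rankMinus s = γ.rankMinus s) ∧
    (∀ s, γ'.rankPlus s = γ.rankPlus s) ∧
    (∀ s t, s < t → i.val < s → j.val < t → t ≤ k.val →
      γ'.rankPair s t = γ.rankPair s t + 1) ∧
    (∀ s t, s < t → ¬(i.val < s ∧ j.val < t ∧ t ≤ k.val) →
      γ'.rankPair s t = γ.rankPair s t) ∧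
    Clan.lt γ γ' := by
  classical
  have hijv : i.val < j.val := hij
  have hjkv : j.val < k.val := hjk
  have hikv : i.val < k.val := lt_trans hijv hjkv
  have hijne : i ≠ j := Fin.ne_of_lt hij
  have hikne : i ≠ k := Fin.ne_of_lt (hij.trans hjk)
  have hjkne : j ≠ k := Fin.ne_of_lt hjk
  -- plus signs
  have hplus : ∀ s : ℕ,
      (Finset.univ.filter fun a : Fin (p + q) => a.val < s ∧ γ.c a = Sum.inl true).card
        + (if j.val < s then 1 else 0)
      = (Finset.univ.filter fun a : Fin (p + q) => a.val < s ∧ γ'.c a = Sum.inl true).card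
        + (if k.val < s then 1 else 0) := by
    intro s
    have key := card_filter_three i j k hijne hikne hjkne
      (fun a => a.val < s ∧ γ.c a = Sum.inl true)
      (fun a => a.val < s ∧ γ'.c a = Sum.inl true)
      (fun a h1 h2 h3 => by simp only [hother a h1 h2 h3])
    simpa [hi, hj, hk, hi', hj', hk'] using key
  -- minus signs
  have hminus : ∀ s : ℕ,
      (Finset.univ.filter fun a : Fin (p + q) => a.val < s ∧ γ.c a = Sum.inl false).card
      = (Finset.univ.filter fun a : Fin (p + q) => a.val < s ∧ γ'.c a = Sum.inl false).card := by
    intro s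
    have key := card_filter_three i j k hijne hikne hjkne
      (fun a => a.val < s ∧ γ.c a = Sum.inl false)
      (fun a => a.val < s ∧ γ'.c a = Sum.inl false)
      (fun a h1 h2 h3 => by simp only [hother a h1 h2 h3])
    simpa [hi, hj, hk, hi', hj', hk'] using key
  -- complete pairs
  have hpc : ∀ s : ℕ,
      (Finset.univ.filter fun a : Fin (p + q) =>
        a.val < s ∧ ∃ b, γ.c a = Sum.inr b ∧ b < a).card
        + (if k.val < s then 1 else 0)
      = (Finset.univ.filter fun a : Fin (p + q) =>
        a.val < s ∧ ∃ b, γ'.c a = Sum.inr b ∧ b < a).card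
        + (if j.val < s then 1 else 0) := by
    intro s
    have key := card_filter_three i j k hijne hikne hjkne
      (fun a => a.val < s ∧ ∃ b, γ.c a = Sum.inr b ∧ b < a)
      (fun a => a.val < s ∧ ∃ b, γ'.c a = Sum.inr b ∧ b < a)
      (fun a h1 h2 h3 => by simp only [hother a h1 h2 h3])
    simpa [hi, hj, hk, hi', hj', hk', hij, hjk, hij.trans hjk,
      hij.not_gt, (hij.trans hjk).not_gt] using key
  -- crossing pairs
  have hpair : ∀ s t : ℕ,
      (Finset.univ.filter fun a : Fin (p + q) =>
        a.val < s ∧ ∃ b, γ.c a = Sum.inr b ∧ t ≤ b.val).card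
        + ((if i.val < s ∧ t ≤ k.val then 1 else 0)
          + (if k.val < s ∧ t ≤ i.val then 1 else 0))
      = (Finset.univ.filter fun a : Fin (p + q) =>
        a.val < s ∧ ∃ b, γ'.c a = Sum.inr b ∧ t ≤ b.val).card
        + ((if i.val < s ∧ t ≤ j.val then 1 else 0)
          + (if j.val < s ∧ t ≤ i.val then 1 else 0)) := by
    intro s t
    have key := card_filter_three i j k hijne hikne hjkne
      (fun a => a.val < s ∧ ∃ b, γ.c a = Sum.inr b ∧ t ≤ b.val)
      (fun a => a.val < s ∧ ∃ b, γ'.c a = Sum.inr b ∧ t ≤ b.val)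
      (fun a h1 h2 h3 => by simp only [hother a h1 h2 h3])
    simpa [hi, hj, hk, hi', hj', hk', add_assoc] using key
  have H1 : ∀ s, j.val < s → s ≤ k.val → γ'.rankMinus s + 1 = γ.rankMinus s := by
    intro s h1 h2
    have e1 := hminus s
    have e2 := hpc s
    simp only [Clan.rankMinus]
    rw [if_pos h1, if_neg (by omega : ¬ k.val < s)] at e2
    omega
  have H2 : ∀ s, ¬(j.val < s ∧ s ≤ k.val) → γ'.rankMinus s = γ.rankMinus s := by
    intro s h
    have e1 := hminus s
    have e2 := hpc s
    simp only [Clan.rankMinus]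
    split_ifs at e2 <;> omega
  have H3 : ∀ s, γ'.rankPlus s = γ.rankPlus s := by
    intro s
    have e1 := hplus s
    have e2 := hpc s
    simp only [Clan.rankPlus]
    split_ifs at e1 e2 <;> omega
  have H4 : ∀ s t, s < t → i.val < s → j.val < t → t ≤ k.val →
      γ'.rankPair s t = γ.rankPair s t + 1 := by
    intro s t hst h1 h2 h3
    have e := hpair s t
    simp only [Clan.rankPair]
    split_ifs at e <;> omega
  have H5 : ∀ s t, s < t → ¬(i.val < s ∧ j.val < t ∧ t ≤ k.val) →
      γ'.rankPair s t = γ.rankPair s t := by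
    intro s t hst h
    have e := hpair s t
    simp only [Clan.rankPair]
    split_ifs at e <;> omega
  refine ⟨H1, H2, H3, H4, H5, ?_, ?_⟩
  · refine ⟨fun s => (H3 s).le, ?_, ?_⟩
    · intro s
      by_cases h : j.val < s ∧ s ≤ k.val
      · have := H1 s h.1 h.2; omega
      · have := H2 s h; omega
    · intro s t hst
      by_cases h : i.val < s ∧ j.val < t ∧ t ≤ k.val
      · have := H4 s t hst h.1 h.2.1 h.2.2; omega
      · have := H5 s t hst h; omega
  · intro hle
    have hle3 := hle.2.2 (i.val + 1) (j.val + 1) (by omega)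
    have h4 := H4 (i.val + 1) (j.val + 1) (by omega) (by omega) (by omega) (by omega)
    omega
end

section
/- Let γ be a (p,q)-clan containing two pairs of matching natural numbers at positions i < j and k < l with i < j < k < l (pattern 1122), and let γ' be obtained by re-pairing them so that positions i,k match and positions j,l match (pattern 1212). Then γ'(s;+) = γ(s;+) - 1 and γ'(s;-) = γ(s;-) - 1 for all s with j ≤ s < k; γ'(s;t) = γ(s;t) + 1 for i ≤ s < j ≤ t < k; γ'(s;t) = γ(s;t) + 1 for j ≤ s < k ≤ t < l; γ'(s;t) = γ(s;t) + 2 for j ≤ s < t < k; and all other rank numbers are unchanged. In particular γ < γ' in the combinatorial Bruhat order. -/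
open Finset

/-!
Every rank number counts the positions `a` satisfying a condition on `a` and on the entry
`c a`. Since `γ` and `γ'` agree away from `{i, j, k, l}`, each rank number of `γ'` differs from
that of `γ` only by the contributions of these four positions, which are explicit indicators
in `s`, `t` and `i < j < k < l`.
-/

theorem Finset.card_filter_add_sum_eq_of_forall_notMem {α : Type*} [Fintype α]
    (S : Finset α) {P Q : α → Prop} [DecidablePred P] [DecidablePred Q]
    (h : ∀ a ∉ S, P a ↔ Q a) :
    #(univ.filter P) + ∑ a ∈ S, (if Q a then 1 else 0)
      = #(univ.filter Q) + ∑ a ∈ S, (if P a then 1 else 0) := by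
  classical
  have hcompl : ∑ a ∈ Sᶜ, (if P a then 1 else 0) = ∑ a ∈ Sᶜ, (if Q a then 1 else 0) :=
    sum_congr rfl fun a ha => if_congr (h a (mem_compl.mp ha)) rfl rfl
  rw [card_filter, card_filter, ← sum_add_sum_compl S, ← sum_add_sum_compl S, hcompl]
  ring

namespace Clan

variable {p q : ℕ}

/-- `γ'` arises from `γ` by re-pairing the nested pairs `(i, j)`, `(k, l)` as `(i, k)`, `(j, l)`
(the move `1122 → 1212`). -/
structure IsMove1122 (γ γ' : Clan p q) (i j k l : Fin (p + q)) : Prop where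
  lt_ij : i < j
  lt_jk : j < k
  lt_kl : k < l
  c_i : γ.c i = Sum.inr j
  c_j : γ.c j = Sum.inr i
  c_k : γ.c k = Sum.inr l
  c_l : γ.c l = Sum.inr k
  c'_i : γ'.c i = Sum.inr k
  c'_k : γ'.c k = Sum.inr i
  c'_j : γ'.c j = Sum.inr l
  c'_l : γ'.c l = Sum.inr j
  c'_eq : ∀ a, a ≠ i → a ≠ j → a ≠ k → a ≠ l → γ'.c a = γ.c a

namespace IsMove1122

variable {γ γ' : Clan p q} {i j k l : Fin (p + q)}

theorem card_filter_add (h : IsMove1122 γ γ' i j k l)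
    (R : Fin (p + q) → Bool ⊕ Fin (p + q) → Prop) [∀ a x, Decidable (R a x)] :
    #(univ.filter fun a => R a (γ'.c a))
        + ((if R i (.inr j) then 1 else 0) + (if R j (.inr i) then 1 else 0)
          + (if R k (.inr l) then 1 else 0) + (if R l (.inr k) then 1 else 0))
      = #(univ.filter fun a => R a (γ.c a))
        + ((if R i (.inr k) then 1 else 0) + (if R j (.inr l) then 1 else 0)
          + (if R k (.inr i) then 1 else 0) + (if R l (.inr j) then 1 else 0)) := by
  have hi : i ∉ ({j, k, l} : Finset _) := by
    simp [h.lt_ij.ne, (h.lt_ij.trans h.lt_jk).ne, (h.lt_ij.trans (h.lt_jk.trans h.lt_kl)).ne]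
  have hj : j ∉ ({k, l} : Finset _) := by simp [h.lt_jk.ne, (h.lt_jk.trans h.lt_kl).ne]
  have key := card_filter_add_sum_eq_of_forall_notMem {i, j, k, l}
    (P := fun a => R a (γ'.c a)) (Q := fun a => R a (γ.c a)) fun a ha => by
      simp only [mem_insert, mem_singleton, not_or] at ha
      rw [h.c'_eq a ha.1 ha.2.1 ha.2.2.1 ha.2.2.2]
  rw [sum_insert hi, sum_insert hj, sum_pair h.lt_kl.ne, sum_insert hi, sum_insert hj,
    sum_pair h.lt_kl.ne] at key
  simp only [h.c_i, h.c_j, h.c_k, h.c_l, h.c'_i, h.c'_j, h.c'_k, h.c'_l] at key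
  omega

theorem card_filter_inl_eq (h : IsMove1122 γ γ' i j k l) (s : ℕ) (σ : Bool) :
    #(univ.filter fun a : Fin (p + q) => a.val < s ∧ γ'.c a = .inl σ)
      = #(univ.filter fun a : Fin (p + q) => a.val < s ∧ γ.c a = .inl σ) := by
  simpa using h.card_filter_add fun a x => a.val < s ∧ x = .inl σ

theorem card_filter_mate_lt_add (h : IsMove1122 γ γ' i j k l) (s : ℕ) :
    #(univ.filter fun a : Fin (p + q) => a.val < s ∧ ∃ b, γ'.c a = .inr b ∧ b < a)
        + (if j.val < s then 1 else 0)
      = #(univ.filter fun a : Fin (p + q) => a.val < s ∧ ∃ b, γ.c a = .inr b ∧ b < a)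
        + (if k.val < s then 1 else 0) := by
  have key := h.card_filter_add fun a x => a.val < s ∧ ∃ b, x = .inr b ∧ b < a
  simp only [Sum.inr.injEq, exists_eq_left', h.lt_ij, h.lt_kl, h.lt_ij.trans h.lt_jk,
    h.lt_jk.trans h.lt_kl, not_lt_of_gt, and_true, and_false, if_false] at key
  omega

theorem rankPlus_add (h : IsMove1122 γ γ' i j k l) (s : ℕ) :
    γ'.rankPlus s + (if j.val < s then 1 else 0)
      = γ.rankPlus s + (if k.val < s then 1 else 0) := by
  have := h.card_filter_mate_lt_add s
  rw [rankPlus, rankPlus, h.card_filter_inl_eq s true]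
  omega

theorem rankMinus_add (h : IsMove1122 γ γ' i j k l) (s : ℕ) :
    γ'.rankMinus s + (if j.val < s then 1 else 0)
      = γ.rankMinus s + (if k.val < s then 1 else 0) := by
  have := h.card_filter_mate_lt_add s
  rw [rankMinus, rankMinus, h.card_filter_inl_eq s false]
  omega

theorem rankPair_add (h : IsMove1122 γ γ' i j k l) {s t : ℕ} (hst : s < t) :
    γ'.rankPair s t
        + ((if i.val < s ∧ t ≤ j.val then 1 else 0) + (if k.val < s ∧ t ≤ l.val then 1 else 0))
      = γ.rankPair s t
        + ((if i.val < s ∧ t ≤ k.val then 1 else 0) + (if j.val < s ∧ t ≤ l.val then 1 else 0)) := by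
  have key := h.card_filter_add fun a x => a.val < s ∧ ∃ b, x = .inr b ∧ t ≤ b.val
  simp only [Sum.inr.injEq, exists_eq_left'] at key
  have hij : i.val < j.val := h.lt_ij
  have hjk : j.val < k.val := h.lt_jk
  have hkl : k.val < l.val := h.lt_kl
  rw [rankPair, rankPair]
  split_ifs at key ⊢ <;> omega

protected theorem le (h : IsMove1122 γ γ' i j k l) : Clan.le γ γ' := by
  have hjk : j.val < k.val := h.lt_jk
  refine ⟨fun s => ?_, fun s => ?_, fun s t hst => ?_⟩
  · have := h.rankPlus_add s
    split_ifs at this <;> omega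
  · have := h.rankMinus_add s
    split_ifs at this <;> omega
  · have := h.rankPair_add hst
    split_ifs at this <;> omega

protected theorem lt (h : IsMove1122 γ γ' i j k l) : Clan.lt γ γ' := by
  refine ⟨h.le, fun hle => ?_⟩
  have hij : i.val < j.val := h.lt_ij
  have hjk : j.val < k.val := h.lt_jk
  have := hle.2.2 j k hjk
  have := h.rankPair_add hjk
  split_ifs at this <;> omega

end IsMove1122

end Clan

/-- the move `1122 → 1212` (nested pairs `(i,j)`, `(k,l)` with
`i < j < k < l` re-paired as `(i,k)`, `(j,l)`) changes rank numbers exactly as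
stated, and yields `γ < γ'` in the combinatorial Bruhat order. -/
theorem clan_move_1122_1212 {p q : ℕ} (γ γ' : Clan p q) (i j k l : Fin (p + q))
    (hij : i < j) (hjk : j < k) (hkl : k < l)
    (hi : γ.c i = Sum.inr j) (hj : γ.c j = Sum.inr i)
    (hk : γ.c k = Sum.inr l) (hl : γ.c l = Sum.inr k)
    (hi' : γ'.c i = Sum.inr k) (hk' : γ'.c k = Sum.inr i)
    (hj' : γ'.c j = Sum.inr l) (hl' : γ'.c l = Sum.inr j)
    (hother : ∀ a, a ≠ i → a ≠ j → a ≠ k → a ≠ l → γ'.c a = γ.c a) :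
    (∀ s, j.val < s → s ≤ k.val →
      γ'.rankPlus s + 1 = γ.rankPlus s ∧ γ'.rankMinus s + 1 = γ.rankMinus s) ∧
    (∀ s, ¬(j.val < s ∧ s ≤ k.val) →
      γ'.rankPlus s = γ.rankPlus s ∧ γ'.rankMinus s = γ.rankMinus s) ∧
    (∀ s t, i.val < s → s ≤ j.val → j.val < t → t ≤ k.val →
      γ'.rankPair s t = γ.rankPair s t + 1) ∧
    (∀ s t, j.val < s → s ≤ k.val → k.val < t → t ≤ l.val →
      γ'.rankPair s t = γ.rankPair s t + 1) ∧
    (∀ s t, j.val < s → s < t → t ≤ k.val →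
      γ'.rankPair s t = γ.rankPair s t + 2) ∧
    (∀ s t, s < t →
      ¬(i.val < s ∧ s ≤ j.val ∧ j.val < t ∧ t ≤ k.val) →
      ¬(j.val < s ∧ s ≤ k.val ∧ k.val < t ∧ t ≤ l.val) →
      ¬(j.val < s ∧ t ≤ k.val) →
      γ'.rankPair s t = γ.rankPair s t) ∧
    Clan.lt γ γ' := by
  have h : γ.IsMove1122 γ' i j k l := ⟨hij, hjk, hkl, hi, hj, hk, hl, hi', hk', hj', hl', hother⟩
  have hij : i.val < j.val := hij
  have hjk : j.val < k.val := hjk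
  refine ⟨fun s _ _ => ?_, fun s _ => ?_, fun s t _ _ _ _ => ?_, fun s t _ _ _ _ => ?_,
    fun s t _ _ _ => ?_, fun s t _ _ _ _ => ?_, h.lt⟩
  iterate 2
    have hP := h.rankPlus_add s
    have hM := h.rankMinus_add s
    split_ifs at hP hM <;> omega
  all_goals
    have hR := h.rankPair_add (s := s) (t := t) (by omega)
    split_ifs at hR <;> omega
end

section
/- Let γ be a (p,q)-clan with pairs at positions i < k and j < l interlocking as i < j < k < l with c_i = c_k and c_j = c_l (pattern 1212), and let γ' be the re-pairing with c_i = c_l and c_j = c_k (pattern 1221). Then the only changes in rank numbers are γ'(s;t) = γ(s;t) + 1 for all pairs s < t with i ≤ s < j and k ≤ t < l; in particular γ < γ' in the combinatorial Bruhat order. -/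
/-!
The two clans differ only at `i, j, k, l`, which are matched in both, so the sign counts agree;
and `k, l` close an arc in both, so the counts of complete pairs agree too. For `s ≤ t` a
position `a` counts towards `γ(s;t)` iff `a < s` and its mate is `≥ t`, which forces `a` to
open its arc. Hence only `i` and `j` can change their contribution, from
`[i < s, t ≤ k] + [j < s, t ≤ l]` to `[i < s, t ≤ l] + [j < s, t ≤ k]`: a gain of exactly one
when `i < s ≤ j < k < t ≤ l`, and nothing otherwise.
-/

open Finset

namespace Clan

variable {p q : ℕ}

/-- The move `1212 → 1221` on the crossing arcs `(i,k)`, `(j,l)`. -/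
structure NestingMove (γ γ' : Clan p q) (i j k l : Fin (p + q)) : Prop where
  lt_ij : i < j
  lt_jk : j < k
  lt_kl : k < l
  c_i : γ.c i = Sum.inr k
  c_k : γ.c k = Sum.inr i
  c_j : γ.c j = Sum.inr l
  c_l : γ.c l = Sum.inr j
  c'_i : γ'.c i = Sum.inr l
  c'_l : γ'.c l = Sum.inr i
  c'_j : γ'.c j = Sum.inr k
  c'_k : γ'.c k = Sum.inr j
  c'_of_ne : ∀ a, a ≠ i → a ≠ j → a ≠ k → a ≠ l → γ'.c a = γ.c a

namespace NestingMove

variable {γ γ' : Clan p q} {i j k l : Fin (p + q)}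

theorem eq_or_c'_eq (h : NestingMove γ γ' i j k l) (a : Fin (p + q)) :
    (a = i ∨ a = j ∨ a = k ∨ a = l) ∨ γ'.c a = γ.c a := by
  by_cases hi : a = i; · tauto
  by_cases hj : a = j; · tauto
  by_cases hk : a = k; · tauto
  by_cases hl : a = l; · tauto
  exact .inr (h.c'_of_ne a hi hj hk hl)

theorem c'_eq_inl_iff (h : NestingMove γ γ' i j k l) (a : Fin (p + q)) (v : Bool) :
    γ'.c a = Sum.inl v ↔ γ.c a = Sum.inl v := by
  rcases h.eq_or_c'_eq a with (rfl | rfl | rfl | rfl) | ha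
  · simp [h.c_i, h.c'_i]
  · simp [h.c_j, h.c'_j]
  · simp [h.c_k, h.c'_k]
  · simp [h.c_l, h.c'_l]
  · rw [ha]

theorem closes_iff (h : NestingMove γ γ' i j k l) (a : Fin (p + q)) :
    (∃ b, γ'.c a = Sum.inr b ∧ b < a) ↔ ∃ b, γ.c a = Sum.inr b ∧ b < a := by
  have := h.lt_ij; have := h.lt_jk; have := h.lt_kl
  rcases h.eq_or_c'_eq a with ha | ha
  · rcases ha with rfl | rfl | rfl | rfl <;>
      simp only [h.c_i, h.c_j, h.c_k, h.c_l, h.c'_i, h.c'_j, h.c'_k, h.c'_l, Sum.inr.injEq,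
        exists_eq_left'] <;> omega
  · rw [ha]

theorem rankPlus_eq (h : NestingMove γ γ' i j k l) : γ'.rankPlus = γ.rankPlus := by
  funext s
  unfold rankPlus
  simp only [h.c'_eq_inl_iff, h.closes_iff]

theorem rankMinus_eq (h : NestingMove γ γ' i j k l) : γ'.rankMinus = γ.rankMinus := by
  funext s
  unfold rankMinus
  simp only [h.c'_eq_inl_iff, h.closes_iff]

theorem rankPair_add (h : NestingMove γ γ' i j k l) {s t : ℕ} (hst : s ≤ t) :
    γ'.rankPair s t + (if i.val < s ∧ t ≤ k.val then 1 else 0)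
        + (if j.val < s ∧ t ≤ l.val then 1 else 0)
      = γ.rankPair s t + (if i.val < s ∧ t ≤ l.val then 1 else 0)
        + (if j.val < s ∧ t ≤ k.val then 1 else 0) := by
  have := h.lt_ij; have := h.lt_jk; have := h.lt_kl
  have hrest : ∀ a ∈ ({i, j} : Finset (Fin (p + q)))ᶜ,
      (a.val < s ∧ ∃ b, γ'.c a = Sum.inr b ∧ t ≤ b.val) ↔
        (a.val < s ∧ ∃ b, γ.c a = Sum.inr b ∧ t ≤ b.val) := by
    intro a ha
    rcases h.eq_or_c'_eq a with (rfl | rfl | rfl | rfl) | ha'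
    · simp at ha
    · simp at ha
    · simp only [h.c_k, h.c'_k, Sum.inr.injEq, exists_eq_left']; omega
    · simp only [h.c_l, h.c'_l, Sum.inr.injEq, exists_eq_left']; omega
    · rw [ha']
  simp only [rankPair, card_filter]
  rw [← sum_add_sum_compl {i, j}, ← sum_add_sum_compl {i, j},
    sum_congr rfl fun a ha => if_congr (hrest a ha) rfl rfl, sum_pair h.lt_ij.ne,
    sum_pair h.lt_ij.ne]
  simp only [h.c_i, h.c_j, h.c'_i, h.c'_j, Sum.inr.injEq, exists_eq_left']
  split_ifs <;> omega

theorem rankPair_eq_add_one (h : NestingMove γ γ' i j k l) {s t : ℕ} (his : i.val < s)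
    (hsj : s ≤ j.val) (hkt : k.val < t) (htl : t ≤ l.val) :
    γ'.rankPair s t = γ.rankPair s t + 1 := by
  have := h.lt_jk
  have := h.rankPair_add (s := s) (t := t) (by omega)
  split_ifs at this <;> omega

theorem rankPair_eq (h : NestingMove γ γ' i j k l) {s t : ℕ} (hst : s ≤ t)
    (hout : ¬(i.val < s ∧ s ≤ j.val ∧ k.val < t ∧ t ≤ l.val)) :
    γ'.rankPair s t = γ.rankPair s t := by
  have := h.lt_ij; have := h.lt_jk; have := h.lt_kl
  have := h.rankPair_add hst
  split_ifs at this <;> omega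

theorem rankPair_le (h : NestingMove γ γ' i j k l) {s t : ℕ} (hst : s ≤ t) :
    γ.rankPair s t ≤ γ'.rankPair s t := by
  have := h.lt_ij; have := h.lt_jk; have := h.lt_kl
  have := h.rankPair_add hst
  split_ifs at this <;> omega

theorem lt (h : NestingMove γ γ' i j k l) : γ.lt γ' := by
  refine ⟨⟨fun s => (congrFun h.rankPlus_eq s).le, fun s => (congrFun h.rankMinus_eq s).le,
    fun s t hst => h.rankPair_le hst.le⟩, fun ⟨_, _, hle⟩ => ?_⟩
  have := h.lt_ij; have := h.lt_jk; have := h.lt_kl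
  have := hle (i.val + 1) (k.val + 1) (by omega)
  have := h.rankPair_eq_add_one (s := i.val + 1) (t := k.val + 1) (by omega) (by omega) (by omega)
    (by omega)
  omega

end NestingMove

end Clan

/-- the move `1212 → 1221` (crossing pairs `(i,k)`, `(j,l)` with
`i < j < k < l` re-paired as `(i,l)`, `(j,k)`) changes only the rank numbers
`γ(s;t)` for `i ≤ s < j`, `k ≤ t < l` (each increasing by `1`); in particular
`γ < γ'` in the combinatorial Bruhat order. -/
theorem clan_move_1212_1221 {p q : ℕ} (γ γ' : Clan p q) (i j k l : Fin (p + q))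
    (hij : i < j) (hjk : j < k) (hkl : k < l)
    (hi : γ.c i = Sum.inr k) (hk : γ.c k = Sum.inr i)
    (hj : γ.c j = Sum.inr l) (hl : γ.c l = Sum.inr j)
    (hi' : γ'.c i = Sum.inr l) (hl' : γ'.c l = Sum.inr i)
    (hj' : γ'.c j = Sum.inr k) (hk' : γ'.c k = Sum.inr j)
    (hother : ∀ a, a ≠ i → a ≠ j → a ≠ k → a ≠ l → γ'.c a = γ.c a) :
    (∀ s t, i.val < s → s ≤ j.val → k.val < t → t ≤ l.val →
      γ'.rankPair s t = γ.rankPair s t + 1) ∧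
    (∀ s, γ'.rankPlus s = γ.rankPlus s) ∧
    (∀ s, γ'.rankMinus s = γ.rankMinus s) ∧
    (∀ s t, s < t → ¬(i.val < s ∧ s ≤ j.val ∧ k.val < t ∧ t ≤ l.val) →
      γ'.rankPair s t = γ.rankPair s t) ∧
    Clan.lt γ γ' := by
  have h : γ.NestingMove γ' i j k l :=
    ⟨hij, hjk, hkl, hi, hk, hj, hl, hi', hl', hj', hk', hother⟩
  exact ⟨fun _ _ => h.rankPair_eq_add_one, congrFun h.rankPlus_eq, congrFun h.rankMinus_eq,
    fun _ _ hst => h.rankPair_eq hst.le, h.lt⟩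
end

section
/- Let n = p+q and let σ ∈ S_p × S_q ⊂ S_n. Then in the polynomial ring ℂ[x_1,...,x_n, Y_1,...,Y_n], the substitution of x_i ↦ Y_{σ(w(i))} into P(x) = (-1)^{l_p(w)} ∏_{i ≤ p < j} (x_{w^{-1}(i)} - Y_j) equals (-1)^{l_p(w)} ∏_{i ≤ p < j} (Y_i - Y_j). Moreover, if w' ∈ S_n satisfies w'w^{-1} ∉ S_p × S_q, then substituting x_i ↦ Y_{w'(i)} into P(x) gives 0. -/
open Finset MvPolynomial

/-- `l_p(w) = #{(i,j) : i < j, w(j) ≤ p < w(i)}`. -/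
def lpInv (p : ℕ) {n : ℕ} (w : Equiv.Perm (Fin n)) : ℕ :=
  (Finset.univ.filter fun ij : Fin n × Fin n =>
    ij.1 < ij.2 ∧ (w ij.2).val < p ∧ p ≤ (w ij.1).val).card

/-!
The first substitution only permutes the factors of `∏_{i ≤ p < j} (Y_i - Y_j)`, since `σ`
preserves `{1, …, p}`. For the second, a permutation of a finite set that does not preserve
`{1, …, p}` must send some `i ≤ p` to some `j > p`, and then the factor `Y_j - Y_j` vanishes.
-/

/-- Injective self-maps of a finite set are surjective onto it. -/
theorem Equiv.Perm.exists_apply_not_of_not_forall_iff {α : Type*} [Finite α] (f : Equiv.Perm α)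
    (P : α → Prop) (h : ¬ ∀ a, P a ↔ P (f a)) : ∃ a, P a ∧ ¬ P (f a) := by
  by_contra! hmaps
  have hbij : Set.BijOn f {a | P a} {a | P a} :=
    ((Set.toFinite _).injOn_iff_bijOn_of_mapsTo hmaps).mp f.injective.injOn
  refine h fun a => ⟨hmaps a, fun hfa => ?_⟩
  obtain ⟨b, hb, hfb⟩ := hbij.surjOn hfa
  rwa [← f.injective hfb]

theorem MvPolynomial.prod_prod_X_sub_X_eq_zero {σ R : Type*} [CommRing R] (s t : Finset σ)
    (g : σ → σ) {i : σ} (hi : i ∈ s) (hgi : g i ∈ t) :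
    ∏ i ∈ s, ∏ j ∈ t, (X (g i) - X j : MvPolynomial σ R) = 0 :=
  prod_eq_zero hi (prod_eq_zero hgi (sub_self _))

/-- substituting `x_i ↦ Y_{σ(w(i))}` for `σ ∈ S_p × S_q` into
`P(x) = (-1)^{l_p(w)} ∏_{i ≤ p < j} (x_{w⁻¹(i)} - Y_j)` gives
`(-1)^{l_p(w)} ∏_{i ≤ p < j} (Y_i - Y_j)`, while substituting `x_i ↦ Y_{w'(i)}`
for `w'` with `w'w⁻¹ ∉ S_p × S_q` gives `0`. -/
theorem closed_orbit_formula_typeA (p q : ℕ) (w : Equiv.Perm (Fin (p + q))) :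
    (∀ σ : Equiv.Perm (Fin (p + q)), (∀ a, a.val < p ↔ (σ a).val < p) →
      (-1 : MvPolynomial (Fin (p + q)) ℂ) ^ lpInv p w *
        ∏ i ∈ Finset.univ.filter (fun i : Fin (p + q) => i.val < p),
          ∏ j ∈ Finset.univ.filter (fun j : Fin (p + q) => p ≤ j.val),
            (X (σ (w (w⁻¹ i))) - X j)
      = (-1 : MvPolynomial (Fin (p + q)) ℂ) ^ lpInv p w *
        ∏ i ∈ Finset.univ.filter (fun i : Fin (p + q) => i.val < p),
          ∏ j ∈ Finset.univ.filter (fun j : Fin (p + q) => p ≤ j.val),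
            (X i - X j)) ∧
    (∀ w' : Equiv.Perm (Fin (p + q)),
      ¬ (∀ a, a.val < p ↔ ((w' * w⁻¹) a).val < p) →
      (-1 : MvPolynomial (Fin (p + q)) ℂ) ^ lpInv p w *
        ∏ i ∈ Finset.univ.filter (fun i : Fin (p + q) => i.val < p),
          ∏ j ∈ Finset.univ.filter (fun j : Fin (p + q) => p ≤ j.val),
            (X (w' (w⁻¹ i)) - X j) = 0) := by
  refine ⟨fun σ hσ => ?_, fun w' hw' => ?_⟩
  · simp only [Equiv.Perm.coe_inv, Equiv.apply_symm_apply]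
    congr 1
    exact prod_equiv σ (fun a => by simpa using hσ a) fun _ _ => rfl
  · obtain ⟨i, hi, hw'i⟩ := (w' * w⁻¹).exists_apply_not_of_not_forall_iff (·.val < p) hw'
    refine mul_eq_zero_of_right _ (prod_prod_X_sub_X_eq_zero _ _ _ (i := i) ?_ ?_)
    · simpa using hi
    · simpa using hw'i
end
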